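/- The multicast lower-bound instance M_𝒮 built with parameters C and D has congestion exactly C (every edge carries exactly C labels) and dilation exactly D (every label's induced tree has depth D). -/

import Mathlib

/-- The graph induced by a label `χ`: edges carrying `χ` in their label set. -/
def labelGraph {V L : Type*} (lab : V → V → Finset L) (χ : L) : SimpleGraph V where
  Adj u v := u ≠ v ∧ (χ ∈ lab u v ∨ χ ∈ lab v u)
  symm := ⟨fun u v h => ⟨h.1.symm, h.2.symm⟩⟩
  loopless := ⟨fun v h => h.1 rfl⟩

/-- The vertices of the multicast tree of label `χ`: its root together with all
vertices incident to an edge carrying `χ`. -/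
def labelSupp {V L : Type*} (lab : V → V → Finset L) (root : L → V) (χ : L) : Set V :=
  {v | v = root χ ∨ ∃ u, (labelGraph lab χ).Adj v u}

/-- A store-and-forward schedule for a simultaneous multicast instance: in each
synchronous round at most one packet crosses each edge, packet `m_χ` (initially known
only to `root χ`) may only traverse edges of its tree (edges whose label set contains
`χ`), and nodes may copy packets. `knows t χ` is the set of vertices knowing `m_χ`
after `t` rounds, and `send t u v` is the packet sent from `u` to `v` in round `t+1`. -/
structure Schedule (V L : Type*) (lab : V → V → Finset L) (root : L → V) where
  knows : ℕ → L → Set V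
  send : ℕ → V → V → Option L
  init : ∀ χ, knows 0 χ = {root χ}
  send_mem : ∀ t u v χ, send t u v = some χ → χ ∈ lab u v ∧ u ∈ knows t χ
  one_per_edge : ∀ t u v, (send t u v).isSome → send t v u = none
  step : ∀ t χ, knows (t+1) χ = knows t χ ∪ {v | ∃ u, send t u v = some χ}

/-- A schedule has length at most `T` (solves the instance within `T` rounds) if
after `T` rounds every vertex of every multicast tree — in particular every leaf —
knows the corresponding packet. -/
def Schedule.Solves {V L : Type*} {lab : V → V → Finset L} {root : L → V}
    (S : Schedule V L lab root) (T : ℕ) : Prop :=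
  ∀ χ v, v ∈ labelSupp lab root χ → v ∈ S.knows T χ
section LowerBoundConstruction

variable {L : Type} [DecidableEq L]

open scoped Classical

/-- The ways of "guessing" delayed trees: for each adjacent pair
`(S (2i), S (2i+1))` of label sets, a choice of `C/2` labels from each. -/
def Choices (C m : ℕ) (S : Fin (2 * m) → Finset L) : Type :=
  { f : Fin m → Finset L × Finset L //
    ∀ i : Fin m,
      (f i).1 ⊆ S ⟨2 * i.1, by have := i.isLt; omega⟩ ∧ (f i).1.card = C / 2 ∧
      (f i).2 ⊆ S ⟨2 * i.1 + 1, by have := i.isLt; omega⟩ ∧ (f i).2.card = C / 2 }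

/-- The interleaved tuple `𝒮' ∈ I(𝒮)` corresponding to a choice. -/
def mergeS {C m : ℕ} {S : Fin (2 * m) → Finset L} (f : Choices C m S) :
    Fin m → Finset L := fun i => (f.1 i).1 ∪ (f.1 i).2

def reidx {d : ℕ} (S : Fin (2 ^ (d + 1)) → Finset L) : Fin (2 * 2 ^ d) → Finset L :=
  fun j => S ⟨j.1, by
    have h1 := j.isLt
    have h2 : 2 * 2 ^ d = 2 ^ (d + 1) := by rw [pow_succ, Nat.mul_comm]
    omega⟩

/-- Non-root vertices of the lower-bound instance `M_𝒮` (recursion level `d`,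
dilation `d+1`): for `d = 0` the single vertex `v`; for `d+1` the vertices `v_i`
(the identified roots of the sub-instances) together with, for each guess
`𝒮' ∈ I(𝒮)`, the non-root vertices of `M_𝒮'`. -/
def NRv (C : ℕ) : (d : ℕ) → (Fin (2 ^ d) → Finset L) → Type :=
  Nat.rec (motive := fun d => (Fin (2 ^ d) → Finset L) → Type)
    (fun _ => PUnit)
    (fun d ih S => Fin (2 ^ d) ⊕ (Σ f : Choices C (2 ^ d) (reidx S), ih (mergeS f)))

/-- All vertices of `M_𝒮`: the roots `r_j` together with the non-root vertices. -/
def Vx (C d : ℕ) (S : Fin (2 ^ d) → Finset L) : Type := Fin (2 ^ d) ⊕ NRv C d S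

/-- The labels carried by each edge of `G_𝒮` (`∅` meaning "no edge"): for `d = 0` a
single edge `(r, v)` carrying all labels of `S 0`; for `d + 1`, root edges
`(r_j, v_{⌊j/2⌋})` carrying `S j`, together with the edges of all sub-instances
`M_𝒮'`, `𝒮' ∈ I(𝒮)`, whose roots are identified with the vertices `v_i`. -/
noncomputable def labv (C : ℕ) : (d : ℕ) → (S : Fin (2 ^ d) → Finset L) →
    Vx C d S → Vx C d S → Finset L
  | 0, S, Sum.inl _, Sum.inr _ => S ⟨0, Nat.one_pos⟩
  | 0, S, Sum.inr _, Sum.inl _ => S ⟨0, Nat.one_pos⟩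
  | 0, _, _, _ => ∅
  | d + 1, S, u, v =>
    match u, v with
    | Sum.inl j, Sum.inr (Sum.inl i) => if j.1 / 2 = i.1 then S j else ∅
    | Sum.inr (Sum.inl i), Sum.inl j => if j.1 / 2 = i.1 then S j else ∅
    | Sum.inr (Sum.inl i), Sum.inr (Sum.inr ⟨f, y⟩) =>
        labv C d (mergeS f) (Sum.inl i) (Sum.inr y)
    | Sum.inr (Sum.inr ⟨f, y⟩), Sum.inr (Sum.inl i) =>
        labv C d (mergeS f) (Sum.inr y) (Sum.inl i)
    | Sum.inr (Sum.inr ⟨f, y⟩), Sum.inr (Sum.inr ⟨f', y'⟩) =>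
        if h : f = f' then labv C d (mergeS f') (Sum.inr (h ▸ y)) (Sum.inr y') else ∅
    | _, _ => ∅

/-- The root of the multicast tree of label `χ`: the root vertex `r_j` for the
(unique) `j` with `χ ∈ S j`. -/
noncomputable def rootV (C d : ℕ) (S : Fin (2 ^ d) → Finset L) (χ : L) : Vx C d S :=
  Sum.inl (if h : ∃ j, χ ∈ S j then h.choose else ⟨0, Nat.two_pow_pos d⟩)

end LowerBoundConstruction

/-!
Congestion and dilation are proved by induction on `d`, following the recursion that builds
`M_𝒮`: an edge of `M_𝒮` is either a root edge `(r_j, v_⌊j/2⌋)` carrying `S j`, or an edge of a sub-instance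
`M_𝒮'`, whose label sets `mergeS f` again have `C` labels each and are pairwise disjoint.

For the dilation, give the roots level `0`, the `v_i` level `1`, and the vertices of a
sub-instance one more than their level there. Along every edge the level changes by exactly
one, and in the tree of a label `χ` a vertex has at most one neighbour one level below it,
since `χ` lies in only one `S j`. So a simple path leaving a root climbs one level per step and
has length at most `d + 1`. A path of length exactly `d + 1` exists because at every level
some guess `𝒮' ∈ I(𝒮)` keeps `χ`.
-/

/-- If `ℓ` changes by one along every edge and every vertex has at most one neighbour one level
below it, a path that does not start by going down can never go down. -/
theorem SimpleGraph.Walk.IsPath.length_add_eq_of_grading {V : Type*} {G : SimpleGraph V}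
    {ℓ : V → ℕ} (hstep : ∀ ⦃u v⦄, G.Adj u v → ℓ v = ℓ u + 1 ∨ ℓ u = ℓ v + 1)
    (hpred : ∀ ⦃v w w'⦄, G.Adj v w → G.Adj v w' → ℓ w + 1 = ℓ v → ℓ w' + 1 = ℓ v → w = w')
    {u v : V} {p : G.Walk u v} (hp : p.IsPath)
    (hu : ∀ w, G.Adj u w → ℓ w + 1 = ℓ u → w ∉ p.support) : p.length + ℓ u = ℓ v := by
  induction p with
  | nil => simp
  | @cons a b c h q ih =>
    rw [cons_isPath_iff] at hp
    have hb : ℓ b = ℓ a + 1 :=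
      (hstep h).resolve_right fun hab => hu b h hab.symm (by simp)
    have hq := ih hp.1 fun w hw hwb => hpred hw h.symm hwb hb.symm ▸ hp.2
    rw [length_cons]
    omega

section LowerBoundInstance

open Finset Function

lemma val_lt_two_mul_two_pow {d : ℕ} (j : Fin (2 ^ (d + 1))) : j.1 < 2 * 2 ^ d :=
  pow_succ' 2 d ▸ j.isLt

lemma pairwise_disjoint_reidx {L : Type} {d : ℕ} {S : Fin (2 ^ (d + 1)) → Finset L}
    (hS : Pairwise (Disjoint on S)) : Pairwise (Disjoint on reidx S) :=
  fun _ _ h => hS fun h' => h (Fin.ext (Fin.mk.inj h'))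

variable {L : Type} [DecidableEq L] {C : ℕ}

section Merge

variable {m : ℕ} {S : Fin (2 * m) → Finset L}

lemma mem_mergeS {f : Choices C m S} {i : Fin m} {χ : L} (h : χ ∈ mergeS f i) :
    ∃ j : Fin (2 * m), j.1 / 2 = i.1 ∧ χ ∈ S j := by
  obtain ⟨h₁, -, h₂, -⟩ := f.2 i
  rcases mem_union.1 h with h | h
  · exact ⟨_, by simp, h₁ h⟩
  · exact ⟨_, by simp; omega, h₂ h⟩

lemma card_le_card_mergeS (f : Choices C m S) (i : Fin m) : C / 2 ≤ #(mergeS f i) :=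
  (f.2 i).2.1 ▸ card_le_card subset_union_left

lemma card_mergeS (hC : Even C) (hS : Pairwise (Disjoint on S)) (f : Choices C m S) (i : Fin m) :
    #(mergeS f i) = C := by
  obtain ⟨h₁, hc₁, h₂, hc₂⟩ := f.2 i
  have hdisj : Disjoint (f.1 i).1 (f.1 i).2 := (hS (by simp [Fin.ext_iff])).mono h₁ h₂
  rw [mergeS, card_union_of_disjoint hdisj, hc₁, hc₂]
  obtain ⟨c, rfl⟩ := hC
  omega

lemma pairwise_disjoint_mergeS (hS : Pairwise (Disjoint on S)) (f : Choices C m S) :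
    Pairwise (Disjoint on mergeS f) := by
  intro i i' hi
  refine disjoint_left.2 fun χ hχ hχ' => ?_
  obtain ⟨j, hj, hχj⟩ := mem_mergeS hχ
  obtain ⟨j', hj', hχj'⟩ := mem_mergeS hχ'
  have hjj' : j ≠ j' := by
    rintro rfl
    exact hi (Fin.ext (hj.symm.trans hj'))
  exact disjoint_left.1 (hS hjj') hχj hχj'

lemma exists_choices_mem (hC : 0 < C / 2) (hS : ∀ j, C / 2 ≤ #(S j)) (χ : L) :
    ∃ f : Choices C m S, ∀ i j, j.1 / 2 = i.1 → χ ∈ S j → χ ∈ mergeS f i := by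
  have hpick : ∀ j, ∃ t ⊆ S j, #t = C / 2 ∧ (χ ∈ S j → χ ∈ t) := fun j => by
    obtain ⟨t, hχt, htS, ht⟩ := exists_subsuperset_card_eq (inter_subset_right (s₁ := {χ}))
      ((card_le_card inter_subset_left).trans (by rw [card_singleton]; exact hC)) (hS j)
    exact ⟨t, htS, ht, fun h => hχt (by simp [h])⟩
  choose g hgS hgcard hgmem using hpick
  refine ⟨⟨fun i => (g _, g _), fun i => ⟨hgS _, hgcard _, hgS _, hgcard _⟩⟩, fun i j hji hχ => ?_⟩
  rcases Nat.even_or_odd' j.1 with ⟨k, hk | hk⟩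
  · rw [show j = ⟨2 * i.1, by omega⟩ from Fin.ext (by simp only; omega)] at hχ
    exact mem_union_left _ (hgmem _ hχ)
  · rw [show j = ⟨2 * i.1 + 1, by omega⟩ from Fin.ext (by simp only; omega)] at hχ
    exact mem_union_right _ (hgmem _ hχ)

end Merge

def Vx.level : {d : ℕ} → {S : Fin (2 ^ d) → Finset L} → Vx C d S → ℕ
  | 0, _, Sum.inl _ => 0
  | 0, _, Sum.inr _ => 1
  | _ + 1, _, Sum.inl _ => 0
  | _ + 1, _, Sum.inr (Sum.inl _) => 1
  | _ + 1, _, Sum.inr (Sum.inr ⟨f, y⟩) => level (Sum.inr y : Vx C _ (mergeS f)) + 1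

/-- The sub-instance `M_𝒮'` for the guess `f`, with its roots identified with the `v_i`. -/
def Vx.embed {d : ℕ} {S : Fin (2 ^ (d + 1)) → Finset L} (f : Choices C (2 ^ d) (reidx S)) :
    Vx C d (mergeS f) → Vx C (d + 1) S
  | Sum.inl i => Sum.inr (Sum.inl i)
  | Sum.inr y => Sum.inr (Sum.inr ⟨f, y⟩)

variable {d : ℕ}

namespace Vx

@[simp]
lemma level_inl {S : Fin (2 ^ d) → Finset L} (j : Fin (2 ^ d)) :
    level (Sum.inl j : Vx C d S) = 0 := by
  cases d <;> rfl

lemma level_le : ∀ {d : ℕ} {S : Fin (2 ^ d) → Finset L} (v : Vx C d S), v.level ≤ d + 1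
  | 0, _, Sum.inl _ | 0, _, Sum.inr _ | _ + 1, _, Sum.inl _
  | _ + 1, _, Sum.inr (Sum.inl _) => by simp [level]
  | _ + 1, _, Sum.inr (Sum.inr ⟨_, y⟩) => by simpa [level] using level_le (Sum.inr y)

lemma eq_inl_of_level_eq_zero {S : Fin (2 ^ d) → Finset L} {v : Vx C d S} (h : v.level = 0) :
    ∃ j, v = Sum.inl j := by
  rcases d with _ | d <;> rcases v with j | y
  all_goals first | exact ⟨j, rfl⟩ | skip
  · simp [level] at h
  · rcases y with i | ⟨f, y⟩ <;> simp [level] at h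

variable {S : Fin (2 ^ (d + 1)) → Finset L}

lemma embed_injective (f : Choices C (2 ^ d) (reidx S)) : Injective (embed f) := by
  rintro (i | y) (i' | y') h <;> injection h with h
  · injection h with h
    rw [h]
  · injection h
  · injection h
  · injection h with h
    injection h with _ h
    rw [h]

@[simp]
lemma level_embed (f : Choices C (2 ^ d) (reidx S)) (x : Vx C d (mergeS f)) :
    (embed f x).level = x.level + 1 := by
  rcases x with i | y
  · simp [embed, level]
  · rfl

end Vx

lemma labv_inl_inl (S : Fin (2 ^ d) → Finset L) (j j' : Fin (2 ^ d)) :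
    labv C d S (Sum.inl j) (Sum.inl j') = ∅ := by
  cases d <;> rfl

lemma labv_comm {S : Fin (2 ^ d) → Finset L} (u v : Vx C d S) :
    labv C d S u v = labv C d S v u := by
  induction d with
  | zero => rcases u with _ | _ <;> rcases v with _ | _ <;> rfl
  | succ d ih =>
    rcases u with j | i | ⟨f, y⟩ <;> rcases v with j' | i' | ⟨f', y'⟩
    all_goals first | rfl | exact ih _ _ | skip
    by_cases h : f = f'
    · subst h
      simp only [labv, dif_pos]
      exact ih _ _
    · simp only [labv, dif_neg h, dif_neg (Ne.symm h)]

lemma mem_labv_of_adj {S : Fin (2 ^ d) → Finset L} {χ : L} {u v : Vx C d S}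
    (h : (labelGraph (labv C d S) χ).Adj u v) : χ ∈ labv C d S u v :=
  h.2.elim id (labv_comm u v ▸ ·)

lemma labv_embed {S : Fin (2 ^ (d + 1)) → Finset L} (f : Choices C (2 ^ d) (reidx S))
    (x y : Vx C d (mergeS f)) :
    labv C (d + 1) S (Vx.embed f x) (Vx.embed f y) = labv C d (mergeS f) x y := by
  rcases x with i | x <;> rcases y with i' | y
  · exact (labv_inl_inl _ _ _).symm
  · rfl
  · rfl
  · simp only [Vx.embed, labv, dif_pos]

def Vx.embedHom {S : Fin (2 ^ (d + 1)) → Finset L} (f : Choices C (2 ^ d) (reidx S)) (χ : L) :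
    labelGraph (labv C d (mergeS f)) χ ↪g labelGraph (labv C (d + 1) S) χ where
  toEmbedding := ⟨Vx.embed f, Vx.embed_injective f⟩
  map_rel_iff' := by simp [labelGraph, labv_embed, (Vx.embed_injective f).ne_iff]

lemma labv_succ_cases {S : Fin (2 ^ (d + 1)) → Finset L} {u v : Vx C (d + 1) S}
    (h : (labv C (d + 1) S u v).Nonempty) :
    (∃ j i, j.1 / 2 = i.1 ∧ labv C (d + 1) S u v = S j ∧
      (u = Sum.inl j ∧ v = Sum.inr (Sum.inl i) ∨ u = Sum.inr (Sum.inl i) ∧ v = Sum.inl j)) ∨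
    ∃ f x y, u = Vx.embed f x ∧ v = Vx.embed f y := by
  rcases u with j | i | ⟨f, y⟩ <;> rcases v with j' | i' | ⟨f', y'⟩
  all_goals first
    | (simp [labv] at h; done)
    | exact Or.inr ⟨_, Sum.inl _, Sum.inr _, rfl, rfl⟩
    | exact Or.inr ⟨_, Sum.inr _, Sum.inl _, rfl, rfl⟩
    | skip
  · by_cases hji : j.1 / 2 = i'.1
    · exact Or.inl ⟨j, i', hji, if_pos hji, Or.inl ⟨rfl, rfl⟩⟩
    · simp [labv, hji] at h
  · by_cases hji : j'.1 / 2 = i.1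
    · exact Or.inl ⟨j', i, hji, if_pos hji, Or.inr ⟨rfl, rfl⟩⟩
    · simp [labv, hji] at h
  · by_cases hf : f = f'
    · subst hf
      exact Or.inr ⟨f, Sum.inr y, Sum.inr y', rfl, rfl⟩
    · simp [labv, hf] at h

lemma exists_embed_of_labv_nonempty {S : Fin (2 ^ (d + 1)) → Finset L}
    {f : Choices C (2 ^ d) (reidx S)} {y : NRv C d (mergeS f)} {v : Vx C (d + 1) S}
    (h : (labv C (d + 1) S (Sum.inr (Sum.inr ⟨f, y⟩)) v).Nonempty) :
    ∃ z, v = Vx.embed f z ∧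
      labv C (d + 1) S (Sum.inr (Sum.inr ⟨f, y⟩)) v = labv C d (mergeS f) (Sum.inr y) z := by
  rcases v with j | i | ⟨f', y'⟩
  · simp [labv] at h
  · exact ⟨Sum.inl i, rfl, rfl⟩
  · by_cases hf : f = f'
    · subst hf
      exact ⟨Sum.inr y', rfl, by simp [labv]⟩
    · simp [labv, hf] at h

theorem card_labv_of_nonempty (hC : Even C) {S : Fin (2 ^ d) → Finset L}
    (hcard : ∀ j, #(S j) = C) (hS : Pairwise (Disjoint on S)) {u v : Vx C d S}
    (h : (labv C d S u v).Nonempty) : #(labv C d S u v) = C := by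
  induction d with
  | zero =>
    rcases u with _ | _ <;> rcases v with _ | _
    all_goals first | exact hcard _ | simp [labv] at h
  | succ d ih =>
    rcases labv_succ_cases h with ⟨j, -, -, hj, -⟩ | ⟨f, x, y, rfl, rfl⟩
    · rw [hj, hcard]
    · rw [labv_embed] at h ⊢
      have hS' := pairwise_disjoint_reidx hS
      exact ih (card_mergeS hC hS' f) (pairwise_disjoint_mergeS hS' f) h

lemma exists_labv_inl_eq (S : Fin (2 ^ d) → Finset L) (j : Fin (2 ^ d)) :
    ∃ v : Vx C d S, labv C d S (Sum.inl j) v = S j := by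
  cases d with
  | zero => exact ⟨Sum.inr PUnit.unit, congrArg S (Fin.ext (by omega))⟩
  | succ d =>
    have := val_lt_two_mul_two_pow j
    exact ⟨Sum.inr (Sum.inl ⟨j / 2, by omega⟩), if_pos rfl⟩

theorem level_eq_add_one_or_of_labv_nonempty {S : Fin (2 ^ d) → Finset L} {u v : Vx C d S}
    (h : (labv C d S u v).Nonempty) : v.level = u.level + 1 ∨ u.level = v.level + 1 := by
  induction d with
  | zero => rcases u with _ | _ <;> rcases v with _ | _ <;> simp [labv, Vx.level] at h ⊢
  | succ d ih =>
    rcases labv_succ_cases h with ⟨j, i, -, -, ⟨rfl, rfl⟩ | ⟨rfl, rfl⟩⟩ | ⟨f, x, y, rfl, rfl⟩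
    · exact Or.inl rfl
    · exact Or.inr rfl
    · rw [labv_embed] at h
      simpa using ih h

theorem eq_of_mem_labv_of_level_add_one_eq {S : Fin (2 ^ d) → Finset L}
    (hS : Pairwise (Disjoint on S)) {χ : L} {v w w' : Vx C d S}
    (hw : χ ∈ labv C d S v w) (hw' : χ ∈ labv C d S v w')
    (hl : w.level + 1 = v.level) (hl' : w'.level + 1 = v.level) : w = w' := by
  induction d with
  | zero =>
    have hv := v.level_le
    obtain ⟨j, rfl⟩ := Vx.eq_inl_of_level_eq_zero (v := w) (by omega)
    obtain ⟨j', rfl⟩ := Vx.eq_inl_of_level_eq_zero (v := w') (by omega)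
    exact congrArg _ (Fin.ext (by omega))
  | succ d ih =>
    rcases v with j | i | ⟨f, y⟩
    · simp at hl
    · obtain ⟨j, rfl⟩ := Vx.eq_inl_of_level_eq_zero (v := w) (by simpa [Vx.level] using hl)
      obtain ⟨j', rfl⟩ := Vx.eq_inl_of_level_eq_zero (v := w') (by simpa [Vx.level] using hl')
      simp only [labv, apply_ite (χ ∈ ·), notMem_empty, if_false_right] at hw hw'
      exact congrArg _ (hS.eq (not_disjoint_iff.2 ⟨χ, hw.2, hw'.2⟩))
    · obtain ⟨z, rfl, hz⟩ := exists_embed_of_labv_nonempty ⟨χ, hw⟩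
      obtain ⟨z', rfl, hz'⟩ := exists_embed_of_labv_nonempty ⟨χ, hw'⟩
      rw [hz] at hw
      rw [hz'] at hw'
      change _ = Vx.level (Sum.inr y : Vx C d (mergeS f)) + 1 at hl hl'
      simp only [Vx.level_embed, add_left_inj] at hl hl'
      have hS' := pairwise_disjoint_reidx hS
      exact congrArg _ (ih (pairwise_disjoint_mergeS hS' f) hw hw' hl hl')

theorem length_le_of_isPath {S : Fin (2 ^ d) → Finset L} (hS : Pairwise (Disjoint on S))
    {χ : L} {j : Fin (2 ^ d)} {v : Vx C d S} {p : (labelGraph (labv C d S) χ).Walk (Sum.inl j) v}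
    (hp : p.IsPath) : p.length ≤ d + 1 := by
  have h := hp.length_add_eq_of_grading (ℓ := Vx.level)
    (fun _ _ h => level_eq_add_one_or_of_labv_nonempty ⟨χ, mem_labv_of_adj h⟩)
    (fun _ _ _ h h' =>
      eq_of_mem_labv_of_level_add_one_eq hS (mem_labv_of_adj h) (mem_labv_of_adj h'))
    (by simp)
  simpa [← h] using v.level_le

theorem exists_isPath_from_inl_length_eq (hC : 0 < C / 2) {S : Fin (2 ^ d) → Finset L}
    (hS : ∀ j, C / 2 ≤ #(S j)) {χ : L} {j : Fin (2 ^ d)} (hj : χ ∈ S j) :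
    ∃ (v : Vx C d S) (p : (labelGraph (labv C d S) χ).Walk (Sum.inl j) v),
      p.IsPath ∧ p.length = d + 1 := by
  induction d with
  | zero =>
    have hadj : (labelGraph (labv C 0 S) χ).Adj (Sum.inl j) (Sum.inr PUnit.unit) :=
      ⟨Sum.inl_ne_inr, Or.inl (by rwa [show j = 0 from Fin.ext (by omega)] at hj)⟩
    exact ⟨_, hadj.toWalk, hadj.isPath_toWalk, rfl⟩
  | succ d ih =>
    obtain ⟨f, hf⟩ := exists_choices_mem (S := reidx S) hC (fun _ => hS _) χ
    have hj2 := val_lt_two_mul_two_pow j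
    let i : Fin (2 ^ d) := ⟨j / 2, by omega⟩
    obtain ⟨v, p, hp, hlen⟩ := ih (card_le_card_mergeS f) (hf i ⟨j, hj2⟩ rfl hj)
    have hadj : (labelGraph (labv C (d + 1) S) χ).Adj (Sum.inl j) (Vx.embed f (Sum.inl i)) :=
      ⟨Sum.inl_ne_inr, Or.inl (show χ ∈ ite _ _ _ from (if_pos rfl).symm ▸ hj)⟩
    refine ⟨_, .cons hadj (p.map (Vx.embedHom f χ).toHom), ?_, ?_⟩
    · refine (SimpleGraph.Walk.cons_isPath_iff _ _).2 ⟨hp.map (Vx.embed_injective f), fun h => ?_⟩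
      obtain ⟨x, -, hx⟩ := List.mem_map.1 (SimpleGraph.Walk.support_map _ _ ▸ h)
      rcases x <;> cases hx
    · exact congrArg (· + 1) ((SimpleGraph.Walk.length_map _ _).trans hlen)

lemma rootV_eq {S : Fin (2 ^ d) → Finset L} (hS : Pairwise (Disjoint on S)) {χ : L}
    {j : Fin (2 ^ d)} (hj : χ ∈ S j) : rootV C d S χ = Sum.inl j := by
  have hex : ∃ j, χ ∈ S j := ⟨j, hj⟩
  rw [rootV, dif_pos hex]
  exact congrArg _ (hS.eq (not_disjoint_iff.2 ⟨χ, hex.choose_spec, hj⟩))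

end LowerBoundInstance

/-- The multicast lower-bound instance `M_𝒮` built with parameters
`C` (even, positive) and `D = d + 1` has congestion exactly `C` — every edge carries
exactly `C` labels, and there is such an edge — and dilation exactly `D`: for every
label `χ` of the instance, every simple path in `χ`'s induced tree starting at `χ`'s
root has length at most `D`, and some such path has length exactly `D`. -/
theorem lower_bound_instance_congestion_dilation
    {L : Type} [DecidableEq L] (C d : ℕ) (hCeven : Even C) (hCpos : 0 < C)
    (S : Fin (2 ^ d) → Finset L)
    (hcard : ∀ j, (S j).card = C)
    (hdisj : ∀ j j', j ≠ j' → Disjoint (S j) (S j')) :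
    (∀ u v : Vx C d S, labv C d S u v ≠ ∅ → (labv C d S u v).card = C) ∧
    (∃ u v : Vx C d S, (labv C d S u v).card = C) ∧
    (∀ χ : L, (∃ j, χ ∈ S j) →
      (∀ (v : Vx C d S) (p : (labelGraph (labv C d S) χ).Walk (rootV C d S χ) v),
          p.IsPath → p.length ≤ d + 1) ∧
      (∃ (v : Vx C d S) (p : (labelGraph (labv C d S) χ).Walk (rootV C d S χ) v),
          p.IsPath ∧ p.length = d + 1)) := by
  have hC : 0 < C / 2 := by
    obtain ⟨c, rfl⟩ := hCeven
    omega
  obtain ⟨v, hv⟩ := exists_labv_inl_eq (C := C) S ⟨0, Nat.two_pow_pos d⟩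
  refine ⟨fun u v h => card_labv_of_nonempty hCeven hcard hdisj (Finset.nonempty_iff_ne_empty.2 h),
    ⟨_, v, hv ▸ hcard _⟩, fun χ ⟨j, hj⟩ => ⟨fun v p hp => length_le_of_isPath hdisj hp, ?_⟩⟩
  rw [rootV_eq hdisj hj]
  exact exists_isPath_from_inl_length_eq hC (fun j => hcard j ▸ Nat.div_le_self C 2) hj
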